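/- Under the stated hypotheses, for all indices 1 ≤ i, j ≤ n−1 with |i−j| > 1, the commuting braid relations σ_i σ_j = σ_j σ_i, τ_i τ_j = τ_j τ_i, and σ_i τ_j = τ_j σ_i hold in M. -/

import Mathlib

/-!
Every `σ_i`, `τ_i` arises from its predecessor by one conjugation,
`x_{i+1} = v_i v_{i+1} x_i v_{i+1} v_i`. By induction on these conjugation steps, `v_k` commutes
with `x_i` whenever `|k - i| ≥ 2`: for `k ≥ i + 2` directly, for `k ≤ i - 2` because the braid
relations carry `v_k` through two consecutive steps. The same steps then propagate the four
relations between `x_1 ∈ {σ, τ}` and `y_3`, which are the hypotheses on `σ` and `τ`, to all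
pairs `x_i`, `y_j` with `j ≥ i + 2`.
-/

namespace VSBpaper

/-- `ascV v a b = v a * v (a+1) * ⋯ * v b` (equal to `1` when `b < a`). -/
def ascV {M : Type*} [Monoid M] (v : ℕ → M) (a b : ℕ) : M :=
  ((List.range' a (b + 1 - a)).map v).prod

/-- `descV v a b = v b * v (b-1) * ⋯ * v a` (equal to `1` when `b < a`). -/
def descV {M : Type*} [Monoid M] (v : ℕ → M) (a b : ℕ) : M :=
  (((List.range' a (b + 1 - a)).map v).reverse).prod

section Monoid

variable {M : Type*} [Monoid M]

theorem Commute.sandwich_right {c a b x : M} (ha : Commute c a) (hb : Commute c b)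
    (hx : Commute c x) : Commute c (a * b * x * b * a) :=
  (((ha.mul_right hb).mul_right hx).mul_right hb).mul_right ha

theorem braid_mul_braid_of_commute {a b c : M} (hac : Commute a c)
    (hab : a * b * a = b * a * b) (hbc : b * c * b = c * b * c) :
    a * b * c * a * b = b * c * a * b * c :=
  calc a * b * c * a * b = a * b * a * c * b := by rw [mul_assoc (a * b), ← hac.eq, ← mul_assoc]
    _ = b * a * (b * c * b) := by rw [hab]; simp only [mul_assoc]
    _ = b * c * a * b * c := by
      rw [hbc]; simp only [← mul_assoc]; rw [mul_assoc b a c, hac.eq, ← mul_assoc]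

theorem commute_sandwich_sandwich {a b c x : M} (hac : Commute a c)
    (hab : a * b * a = b * a * b) (hbc : b * c * b = c * b * c) (hcx : Commute c x) :
    Commute a (b * c * (a * b * x * b * a) * c * b) := by
  have left := braid_mul_braid_of_commute hac hab hbc
  have right := braid_mul_braid_of_commute hac.symm hbc.symm hab.symm
  calc a * (b * c * (a * b * x * b * a) * c * b)
      = (a * b * c * a * b) * x * (b * a * c * b) := by simp only [mul_assoc]
    _ = b * c * a * b * (c * x) * (b * a * c * b) := by rw [left]; simp only [mul_assoc]
    _ = b * c * a * b * x * (c * b * a * c * b) := by rw [hcx.eq]; simp only [mul_assoc]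
    _ = b * c * (a * b * x * b * a) * c * b * a := by rw [right]; simp only [mul_assoc]

theorem commute_conj_of_commute_conj {p a b : M} (hp : p * p = 1)
    (h : Commute a (p * b * p)) : Commute (p * a * p) b :=
  calc p * a * p * b = p * (a * (p * b * p)) * p := by simp only [mul_assoc, hp, mul_one]
    _ = p * ((p * b * p) * a) * p := by rw [h.eq]
    _ = b * (p * a * p) := by simp only [← mul_assoc, hp, one_mul]

end Monoid

section Words

variable {M : Type*} [Monoid M] (v : ℕ → M)

theorem descV_self (a : ℕ) : descV v a a = v a := by
  simp [descV]

theorem ascV_self (a : ℕ) : ascV v a a = v a := by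
  simp [ascV]

theorem descV_succ {a b : ℕ} (h : a ≤ b + 1) : descV v a (b + 1) = v (b + 1) * descV v a b := by
  rw [descV, descV, show b + 1 + 1 - a = b + 1 - a + 1 by omega, List.range'_concat]
  simp [show a + (b + 1 - a) = b + 1 by omega]

theorem ascV_succ {a b : ℕ} (h : a ≤ b + 1) : ascV v a (b + 1) = ascV v a b * v (b + 1) := by
  rw [ascV, ascV, show b + 1 + 1 - a = b + 1 - a + 1 by omega, List.range'_concat]
  simp [show a + (b + 1 - a) = b + 1 by omega]

variable {v}

theorem Commute.descV_right {x : M} {a b : ℕ} (h : ∀ k, a ≤ k → k ≤ b → Commute x (v k)) :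
    Commute x (descV v a b) := by
  refine Commute.list_prod_right _ _ fun y hy => ?_
  obtain ⟨k, hk, rfl⟩ := List.mem_map.1 (List.mem_reverse.1 hy)
  rw [List.mem_range'_1] at hk
  exact h k (by omega) (by omega)

theorem Commute.ascV_right {x : M} {a b : ℕ} (h : ∀ k, a ≤ k → k ≤ b → Commute x (v k)) :
    Commute x (ascV v a b) := by
  refine Commute.list_prod_right _ _ fun y hy => ?_
  obtain ⟨k, hk, rfl⟩ := List.mem_map.1 hy
  rw [List.mem_range'_1] at hk
  exact h k (by omega) (by omega)

theorem descV_ascV_two (h13 : Commute (v 1) (v 3)) (x : M) :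
    descV v 1 2 * descV v 2 3 * x * ascV v 2 3 * ascV v 1 2 =
      v 2 * v 3 * v 1 * v 2 * x * (v 2 * v 3 * v 1 * v 2) := by
  have h₁ : descV v 1 2 = v 2 * v 1 := by simp [descV, List.range']
  have h₂ : descV v 2 3 = v 3 * v 2 := by simp [descV, List.range']
  have h₃ : ascV v 2 3 = v 2 * v 3 := by simp [ascV, List.range']
  have h₄ : ascV v 1 2 = v 1 * v 2 := by simp [ascV, List.range']
  rw [h₁, h₂, h₃, h₄]
  simp only [mul_assoc]
  rw [← mul_assoc (v 1) (v 3), h13.eq, mul_assoc]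

theorem conj_two_eq (h13 : Commute (v 1) (v 3)) (x : M) :
    v 2 * v 3 * v 1 * v 2 * x * v 2 * v 1 * v 3 * v 2 =
      v 2 * v 3 * v 1 * v 2 * x * (v 2 * v 3 * v 1 * v 2) := by
  simp only [mul_assoc]
  rw [← mul_assoc (v 1) (v 3), h13.eq, mul_assoc]

theorem conj_two_mul_self (h13 : Commute (v 1) (v 3))
    (hsq : ∀ i, 1 ≤ i → i ≤ 3 → v i * v i = 1) :
    v 2 * v 3 * v 1 * v 2 * (v 2 * v 3 * v 1 * v 2) = 1 := by
  have h1 := hsq 1 le_rfl (by omega)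
  have h2 := hsq 2 (by omega) (by omega)
  have h3 := hsq 3 (by omega) le_rfl
  calc v 2 * v 3 * v 1 * v 2 * (v 2 * v 3 * v 1 * v 2)
      = v 2 * v 3 * (v 1 * (v 2 * v 2) * v 3) * v 1 * v 2 := by simp only [mul_assoc]
    _ = v 2 * (v 3 * v 3) * (v 1 * v 1) * v 2 := by
      rw [h2, mul_one, h13.eq]; simp only [mul_assoc]
    _ = 1 := by rw [h3, h1, mul_one, mul_one, h2]

end Words

section ConjChain

variable {M : Type*} [Monoid M] {n : ℕ} {v : ℕ → M}

/-- The shape of the families `σ_i` and `τ_i`. -/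
structure IsConjChain (n : ℕ) (v x : ℕ → M) : Prop where
  commute_one : ∀ k, 3 ≤ k → k ≤ n - 1 → Commute (v k) (x 1)
  succ : ∀ j, 1 ≤ j → j ≤ n - 2 → x (j + 1) = v j * v (j + 1) * x j * v (j + 1) * v j

theorem isConjChain_of_closed_form
    (hcomm : ∀ i j, 1 ≤ i → i + 2 ≤ j → j ≤ n - 1 → Commute (v i) (v j))
    {x₁ : M} {x : ℕ → M} (hx₁ : x 1 = x₁) (hv : ∀ k, 3 ≤ k → k ≤ n - 1 → Commute (v k) x₁)
    (hx : ∀ i, 1 ≤ i → i ≤ n - 2 →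
      x (i + 1) = descV v 1 i * descV v 2 (i + 1) * x₁ * ascV v 2 (i + 1) * ascV v 1 i) :
    IsConjChain n v x := by
  refine ⟨fun k hk hkn => hx₁ ▸ hv k hk hkn, fun j hj hjn => ?_⟩
  by_cases hj1 : j = 1
  · subst hj1
    rw [hx 1 le_rfl hjn, hx₁, descV_self, descV_self, ascV_self, ascV_self]
  obtain ⟨i, rfl⟩ : ∃ i, j = i + 2 := ⟨j - 2, by omega⟩
  have hfar : ∀ k, 1 ≤ k → k ≤ i + 1 → Commute (v (i + 3)) (v k) :=
    fun k hk hki => (hcomm k (i + 3) hk (by omega) (by omega)).symm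
  rw [hx (i + 2) (by omega) hjn, hx (i + 1) (by omega) (by omega),
    descV_succ v (a := 1) (b := i + 1) (by omega), descV_succ v (a := 2) (b := i + 2) (by omega),
    ascV_succ v (a := 2) (b := i + 2) (by omega), ascV_succ v (a := 1) (b := i + 1) (by omega)]
  simp only [mul_assoc]
  rw [(Commute.descV_right hfar).left_comm, (Commute.ascV_right hfar).left_comm]

namespace IsConjChain

variable {x y : ℕ → M}

theorem commute_v_of_far_above (hx : IsConjChain n v x)
    (hcomm : ∀ i j, 1 ≤ i → i + 2 ≤ j → j ≤ n - 1 → Commute (v i) (v j)) :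
    ∀ i, 1 ≤ i → ∀ k, i + 2 ≤ k → k ≤ n - 1 → Commute (v k) (x i) := by
  intro i hi
  induction i, hi using Nat.le_induction with
  | base => exact fun k hk hkn => hx.commute_one k hk hkn
  | succ i hi ih =>
    intro k hk hkn
    rw [hx.succ i hi (by omega)]
    exact Commute.sandwich_right (hcomm i k hi (by omega) hkn).symm
      (hcomm (i + 1) k (by omega) hk hkn).symm (ih k (by omega) hkn)

theorem commute_v_of_far_below (hx : IsConjChain n v x)
    (hbraid : ∀ i, 1 ≤ i → i + 1 ≤ n - 1 → v i * v (i + 1) * v i = v (i + 1) * v i * v (i + 1))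
    (hcomm : ∀ i j, 1 ≤ i → i + 2 ≤ j → j ≤ n - 1 → Commute (v i) (v j)) :
    ∀ k j, 1 ≤ k → k + 2 ≤ j → j ≤ n - 1 → Commute (v k) (x j) := by
  intro k j hk hkj
  induction j, hkj using Nat.le_induction with
  | base =>
    intro hkn
    rw [hx.succ (k + 1) (by omega) (by omega), hx.succ k hk (by omega)]
    exact commute_sandwich_sandwich (hcomm k (k + 2) hk le_rfl hkn)
      (hbraid k hk (by omega)) (hbraid (k + 1) (by omega) hkn)
      (hx.commute_v_of_far_above hcomm k hk (k + 2) le_rfl hkn)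
  | succ j hj ih =>
    intro hjn
    rw [hx.succ j (by omega) (by omega)]
    exact Commute.sandwich_right (hcomm k j hk hj (by omega))
      (hcomm k (j + 1) hk (by omega) hjn) (ih (by omega))

theorem commute_of_commute_one_three (hx : IsConjChain n v x) (hy : IsConjChain n v y)
    (hbraid : ∀ i, 1 ≤ i → i + 1 ≤ n - 1 → v i * v (i + 1) * v i = v (i + 1) * v i * v (i + 1))
    (hcomm : ∀ i j, 1 ≤ i → i + 2 ≤ j → j ≤ n - 1 → Commute (v i) (v j))
    (h13 : Commute (x 1) (y 3)) :
    ∀ i j, 1 ≤ i → i + 2 ≤ j → j ≤ n - 1 → Commute (x i) (y j) := by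
  have hx₁ : ∀ j, 3 ≤ j → j ≤ n - 1 → Commute (x 1) (y j) := by
    intro j hj
    induction j, hj using Nat.le_induction with
    | base => exact fun _ => h13
    | succ j hj ih =>
      intro hjn
      rw [hy.succ j (by omega) (by omega)]
      exact Commute.sandwich_right (hx.commute_one j hj (by omega)).symm
        (hx.commute_one (j + 1) (by omega) hjn).symm (ih (by omega))
  intro i j hi
  induction i, hi using Nat.le_induction generalizing j with
  | base => exact fun hj hjn => hx₁ j hj hjn
  | succ i hi ih =>
    intro hij hjn
    rw [hx.succ i hi (by omega)]
    have hv := hy.commute_v_of_far_below hbraid hcomm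
    exact (Commute.sandwich_right (hv i j hi (by omega) hjn).symm
      (hv (i + 1) j (by omega) hij hjn).symm (ih j (by omega) hjn).symm).symm

theorem commute_of_far (hx : IsConjChain n v x) (hy : IsConjChain n v y)
    (hbraid : ∀ i, 1 ≤ i → i + 1 ≤ n - 1 → v i * v (i + 1) * v i = v (i + 1) * v i * v (i + 1))
    (hcomm : ∀ i j, 1 ≤ i → i + 2 ≤ j → j ≤ n - 1 → Commute (v i) (v j))
    (hxy : Commute (x 1) (y 3)) (hyx : Commute (y 1) (x 3)) {i j : ℕ} (hi : 1 ≤ i)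
    (hin : i ≤ n - 1) (hj : 1 ≤ j) (hjn : j ≤ n - 1) (hij : i + 1 < j ∨ j + 1 < i) :
    Commute (x i) (y j) := by
  rcases hij with hij | hji
  · exact hx.commute_of_commute_one_three hy hbraid hcomm hxy i j hi hij hjn
  · exact (hy.commute_of_commute_one_three hx hbraid hcomm hyx j i hj hji hin).symm

end IsConjChain

end ConjChain

theorem far_commuting_braid_relations_general {M : Type*} [Monoid M] (n : ℕ) (v : ℕ → M)
    (hvbraid : ∀ i j : ℕ, 1 ≤ i → i ≤ n - 1 → 1 ≤ j → j ≤ n - 1 → (i + 1 = j ∨ j + 1 = i) →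
      v i * v j * v i = v j * v i * v j)
    (hvcomm : ∀ i j : ℕ, 1 ≤ i → i ≤ n - 1 → 1 ≤ j → j ≤ n - 1 → (i + 1 < j ∨ j + 1 < i) →
      v i * v j = v j * v i)
    (hvsq : ∀ i : ℕ, 1 ≤ i → i ≤ n - 1 → v i * v i = 1)
    (σ τ : M)
    (hτv : ∀ i : ℕ, 3 ≤ i → i ≤ n - 1 → τ * v i = v i * τ)
    (hσv : ∀ i : ℕ, 3 ≤ i → i ≤ n - 1 → σ * v i = v i * σ)
    (hfar_σσ : 3 ≤ n - 1 →
      σ * (v 2 * v 3 * v 1 * v 2 * σ * v 2 * v 1 * v 3 * v 2) =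
        (v 2 * v 3 * v 1 * v 2 * σ * v 2 * v 1 * v 3 * v 2) * σ)
    (hfar_τσ : 3 ≤ n - 1 →
      τ * (v 2 * v 3 * v 1 * v 2 * σ * v 2 * v 1 * v 3 * v 2) =
        (v 2 * v 3 * v 1 * v 2 * σ * v 2 * v 1 * v 3 * v 2) * τ)
    (hfar_ττ : 3 ≤ n - 1 →
      τ * (v 2 * v 3 * v 1 * v 2 * τ * v 2 * v 1 * v 3 * v 2) =
        (v 2 * v 3 * v 1 * v 2 * τ * v 2 * v 1 * v 3 * v 2) * τ)
    (σs τs : ℕ → M)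
    (hσ1 : σs 1 = σ) (hτ1 : τs 1 = τ)
    (hσdef : ∀ i : ℕ, 1 ≤ i → i ≤ n - 2 →
      σs (i + 1) = descV v 1 i * descV v 2 (i + 1) * σ * ascV v 2 (i + 1) * ascV v 1 i)
    (hτdef : ∀ i : ℕ, 1 ≤ i → i ≤ n - 2 →
      τs (i + 1) = descV v 1 i * descV v 2 (i + 1) * τ * ascV v 2 (i + 1) * ascV v 1 i) :
    ∀ i j : ℕ, 1 ≤ i → i ≤ n - 1 → 1 ≤ j → j ≤ n - 1 → (i + 1 < j ∨ j + 1 < i) →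
      σs i * σs j = σs j * σs i ∧ τs i * τs j = τs j * τs i ∧ σs i * τs j = τs j * σs i := by
  intro i j hi hin hj hjn hij
  have hn : 3 ≤ n - 1 := by omega
  have hbraid : ∀ i, 1 ≤ i → i + 1 ≤ n - 1 →
      v i * v (i + 1) * v i = v (i + 1) * v i * v (i + 1) :=
    fun i hi hin => hvbraid i (i + 1) hi (by omega) (by omega) hin (Or.inl rfl)
  have hcomm : ∀ i j, 1 ≤ i → i + 2 ≤ j → j ≤ n - 1 → Commute (v i) (v j) :=
    fun i j hi hij hjn => hvcomm i j hi (by omega) (by omega) hjn (Or.inl (by omega))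
  have h13 : Commute (v 1) (v 3) := hcomm 1 3 le_rfl le_rfl hn
  have hσ : IsConjChain n v σs :=
    isConjChain_of_closed_form hcomm hσ1 (fun k hk hkn => (hσv k hk hkn).symm) hσdef
  have hτ : IsConjChain n v τs :=
    isConjChain_of_closed_form hcomm hτ1 (fun k hk hkn => (hτv k hk hkn).symm) hτdef
  have hσ3 := (hσdef 2 (by omega) (by omega)).trans (descV_ascV_two h13 σ)
  have hτ3 := (hτdef 2 (by omega) (by omega)).trans (descV_ascV_two h13 τ)
  have hσσ : Commute (σs 1) (σs 3) := by rw [hσ1, hσ3, ← conj_two_eq h13]; exact hfar_σσ hn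
  have hττ : Commute (τs 1) (τs 3) := by rw [hτ1, hτ3, ← conj_two_eq h13]; exact hfar_ττ hn
  have hτσ : Commute (τs 1) (σs 3) := by rw [hτ1, hσ3, ← conj_two_eq h13]; exact hfar_τσ hn
  -- conjugating by the involution `v 2 * v 3 * v 1 * v 2` turns `τ₁ σ₃ = σ₃ τ₁` into `σ₁ τ₃ = τ₃ σ₁`
  have hστ : Commute (σs 1) (τs 3) := by
    rw [hσ1, hτ3]
    refine (commute_conj_of_commute_conj
      (conj_two_mul_self h13 fun k hk hk3 => hvsq k hk (by omega)) ?_).symm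
    rwa [← hτ1, ← hσ3]
  exact ⟨(hσ.commute_of_far hσ hbraid hcomm hσσ hσσ hi hin hj hjn hij).eq,
    (hτ.commute_of_far hτ hbraid hcomm hττ hττ hi hin hj hjn hij).eq,
    (hσ.commute_of_far hτ hbraid hcomm hστ hτσ hi hin hj hjn hij).eq⟩

/-- **Lemma 4.3.** For all `1 ≤ i, j ≤ n-1` with `|i-j| > 1`, the commuting braid relations `σ_i σ_j = σ_j σ_i`, `τ_i τ_j = τ_j τ_i` and `σ_i τ_j = τ_j σ_i` hold in `M`. -/
theorem far_commuting_braid_relations {M : Type*} [Monoid M] (n : ℕ) (hn : 2 ≤ n) (v : ℕ → M)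
    (hvbraid : ∀ i j : ℕ, 1 ≤ i → i ≤ n - 1 → 1 ≤ j → j ≤ n - 1 → (i + 1 = j ∨ j + 1 = i) →
      v i * v j * v i = v j * v i * v j)
    (hvcomm : ∀ i j : ℕ, 1 ≤ i → i ≤ n - 1 → 1 ≤ j → j ≤ n - 1 → (i + 1 < j ∨ j + 1 < i) →
      v i * v j = v j * v i)
    (hvsq : ∀ i : ℕ, 1 ≤ i → i ≤ n - 1 → v i * v i = 1)
    (σ σ' τ : M)
    (hcomm_στ : σ * τ = τ * σ)
    (hinv : σ * σ' = 1) (hinv' : σ' * σ = 1)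
    (hτv : ∀ i : ℕ, 3 ≤ i → i ≤ n - 1 → τ * v i = v i * τ)
    (hσv : ∀ i : ℕ, 3 ≤ i → i ≤ n - 1 → σ * v i = v i * σ)
    (hbraid_base : 2 ≤ n - 1 →
      σ * (v 1 * v 2 * σ * v 2 * v 1) * σ =
        (v 1 * v 2 * σ * v 2 * v 1) * σ * (v 1 * v 2 * σ * v 2 * v 1))
    (hmixed_base : 2 ≤ n - 1 →
      τ * (v 1 * v 2 * σ * v 2 * v 1) * σ =
        (v 1 * v 2 * σ * v 2 * v 1) * σ * (v 1 * v 2 * τ * v 2 * v 1))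
    (hfar_σσ : 3 ≤ n - 1 →
      σ * (v 2 * v 3 * v 1 * v 2 * σ * v 2 * v 1 * v 3 * v 2) =
        (v 2 * v 3 * v 1 * v 2 * σ * v 2 * v 1 * v 3 * v 2) * σ)
    (hfar_τσ : 3 ≤ n - 1 →
      τ * (v 2 * v 3 * v 1 * v 2 * σ * v 2 * v 1 * v 3 * v 2) =
        (v 2 * v 3 * v 1 * v 2 * σ * v 2 * v 1 * v 3 * v 2) * τ)
    (hfar_ττ : 3 ≤ n - 1 →
      τ * (v 2 * v 3 * v 1 * v 2 * τ * v 2 * v 1 * v 3 * v 2) =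
        (v 2 * v 3 * v 1 * v 2 * τ * v 2 * v 1 * v 3 * v 2) * τ)
    (σs σs' τs : ℕ → M)
    (hσ1 : σs 1 = σ) (hσ'1 : σs' 1 = σ') (hτ1 : τs 1 = τ)
    (hσdef : ∀ i : ℕ, 1 ≤ i → i ≤ n - 2 →
      σs (i + 1) = descV v 1 i * descV v 2 (i + 1) * σ * ascV v 2 (i + 1) * ascV v 1 i)
    (hσ'def : ∀ i : ℕ, 1 ≤ i → i ≤ n - 2 →
      σs' (i + 1) = descV v 1 i * descV v 2 (i + 1) * σ' * ascV v 2 (i + 1) * ascV v 1 i)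
    (hτdef : ∀ i : ℕ, 1 ≤ i → i ≤ n - 2 →
      τs (i + 1) = descV v 1 i * descV v 2 (i + 1) * τ * ascV v 2 (i + 1) * ascV v 1 i) :
    ∀ i j : ℕ, 1 ≤ i → i ≤ n - 1 → 1 ≤ j → j ≤ n - 1 → (i + 1 < j ∨ j + 1 < i) →
      σs i * σs j = σs j * σs i ∧ τs i * τs j = τs j * τs i ∧ σs i * τs j = τs j * σs i :=
  far_commuting_braid_relations_general n v hvbraid hvcomm hvsq σ τ hτv hσv hfar_σσ hfar_τσ hfar_ττ
    σs τs hσ1 hτ1 hσdef hτdef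

end VSBpaper
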